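/- Let f be a signature of arity n whose support is an affine subspace of ℤ₂ⁿ of dimension k < n, let S ⊆ {1,…,n} with |S| = k be a set of free variables for f, and let a ∈ ℂ with a⁴ = 1. Define the arity-k signature f' by f'(y) = Σ_{x ∈ {0,1}ⁿ, x|_S = y} a^{w(x)} f(x), where w(x) is the number of indices i ∉ S with xᵢ = 1. Then f is affine if and only if f' is affine. -/

import Mathlib

/-- `𝔦^r` for `r ∈ ℤ₄`; well defined since `𝔦⁴ = 1`. -/
noncomputable def iPow (r : ZMod 4) : ℂ := Complex.I ^ r.val

/-- View `0, 1 ∈ ℤ₂` as elements of `ℤ₄`. -/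
def z2z4 (a : ZMod 2) : ZMod 4 := (a.val : ZMod 4)

/-- Evaluation at a `{0,1}`-point of the multilinear polynomial over `ℤ₄` whose
coefficient on the monomial `∏_{i ∈ S} xᵢ` is `c S`. -/
def evalML4 {ι : Type*} [Fintype ι] [DecidableEq ι]
    (c : Finset ι → ZMod 4) (x : ι → ZMod 2) : ZMod 4 :=
  ∑ S : Finset ι, c S * ∏ i ∈ S, z2z4 (x i)

/-- `x` extended by a final coordinate `1` (at `none`). -/
def extend1 {ι : Type*} (x : ι → ZMod 2) : Option ι → ZMod 2 := fun o => o.elim 1 x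

/-- A signature is affine if it is `λ · χ_{A(x,1)ᵀ = 0} · 𝔦^{Q(x)}` for a matrix `A`
over `ℤ₂` and a multilinear polynomial `Q` over `ℤ₄` of total degree at most 2
whose cross terms all have even coefficients. -/
def IsAffine {ι : Type*} [Fintype ι] [DecidableEq ι] (f : (ι → ZMod 2) → ℂ) : Prop :=
  ∃ (lam : ℂ) (m : ℕ) (A : Matrix (Fin m) (Option ι) (ZMod 2))
    (c : Finset ι → ZMod 4),
    (∀ S : Finset ι, 2 < S.card → c S = 0) ∧
    (∀ S : Finset ι, S.card = 2 → ∃ t : ZMod 4, c S = 2 * t) ∧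
    ∀ x : ι → ZMod 2,
      f x = lam * (if A.mulVec (extend1 x) = 0 then 1 else 0) * iPow (evalML4 c x)

/-- `f` has affine support of dimension `k`. -/
def HasAffineSupportDim {ι : Type*} [Fintype ι] (f : (ι → ZMod 2) → ℂ) (k : ℕ) : Prop :=
  ∃ (x₀ : ι → ZMod 2) (V : Submodule (ZMod 2) (ι → ZMod 2)),
    Module.finrank (ZMod 2) ↥V = k ∧ {x | f x ≠ 0} = {x | x + x₀ ∈ V}

/-!
On its support an affine signature is `λ · 𝔦^Q` for a quadratic phase `Q : ℤ₂ⁿ → ℤ₄` of the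
allowed shape, and these phases are characterised intrinsically: `Q` is one of them iff its
polarisation `Q (x + y) - Q x - Q y + Q 0` is additive in `x` and takes values in `2ℤ₄`
(the polynomial is recovered by interpolation at the points of weight `≤ 2`). This class is
closed under sums, scalar multiples and affine substitutions, and contains the weight
`x ↦ #{i ∉ S | xᵢ = 1}`.

Since the projection onto the free variables is injective on the affine support, it has an
affine section `σ`, and with `a = 𝔦^s` we get `f' y = 𝔦^(s·w(σ y)) f (σ y)` and, on the
support, `f x = 𝔦^(-s·w(x)) f' (x|_S)`. Hence each of `f`, `f'` has a quadratic phase as soon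
as the other one has, and the support of `f'` is everything.
-/

open Finset

def quadPolar {M : Type*} [AddCommGroup M] (q : M → ZMod 4) (x y : M) : ZMod 4 :=
  q (x + y) - q x - q y + q 0

theorem quadPolar_comm {M : Type*} [AddCommGroup M] (q : M → ZMod 4) (x y : M) :
    quadPolar q x y = quadPolar q y x := by
  simp only [quadPolar, add_comm x y]; ring

structure IsEvenQuadratic {M : Type*} [AddCommGroup M] (q : M → ZMod 4) : Prop where
  two_mul_quadPolar : ∀ x y, 2 * quadPolar q x y = 0
  quadPolar_add_left : ∀ x x' y, quadPolar q (x + x') y = quadPolar q x y + quadPolar q x' y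

namespace IsEvenQuadratic

variable {M N : Type*} [AddCommGroup M] [AddCommGroup N] {q r : M → ZMod 4}

theorem quadPolar_zero_left (hq : IsEvenQuadratic q) (y : M) : quadPolar q 0 y = 0 := by
  simpa using hq.quadPolar_add_left 0 0 y

def quadPolarHom (hq : IsEvenQuadratic q) (y : M) : M →+ ZMod 4 :=
  AddMonoidHom.mk' (quadPolar q · y) fun x x' => hq.quadPolar_add_left x x' y

theorem const (c : ZMod 4) : IsEvenQuadratic (fun _ : M => c) :=
  ⟨fun _ _ => by simp [quadPolar], fun _ _ _ => by simp [quadPolar]⟩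

theorem add (hq : IsEvenQuadratic q) (hr : IsEvenQuadratic r) :
    IsEvenQuadratic (fun x => q x + r x) := by
  have h : ∀ x y, quadPolar (fun x => q x + r x) x y = quadPolar q x y + quadPolar r x y := by
    intro x y; simp only [quadPolar]; ring
  refine ⟨fun x y => ?_, fun x x' y => ?_⟩
  · rw [h, mul_add, hq.two_mul_quadPolar, hr.two_mul_quadPolar, add_zero]
  · rw [h, h, h, hq.quadPolar_add_left, hr.quadPolar_add_left]; ring

theorem const_mul (hq : IsEvenQuadratic q) (t : ZMod 4) : IsEvenQuadratic (fun x => t * q x) := by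
  have h : ∀ x y, quadPolar (fun x => t * q x) x y = t * quadPolar q x y := by
    intro x y; simp only [quadPolar]; ring
  refine ⟨fun x y => ?_, fun x x' y => ?_⟩
  · rw [h, mul_left_comm, hq.two_mul_quadPolar, mul_zero]
  · rw [h, h, h, hq.quadPolar_add_left, mul_add]

theorem sub (hq : IsEvenQuadratic q) (hr : IsEvenQuadratic r) :
    IsEvenQuadratic (fun x => q x - r x) := by
  simpa [sub_eq_add_neg] using hq.add (hr.const_mul (-1))

theorem sum {ι : Type*} (s : Finset ι) {q : ι → M → ZMod 4} (hq : ∀ i ∈ s, IsEvenQuadratic (q i)) :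
    IsEvenQuadratic (fun x => ∑ i ∈ s, q i x) := by
  classical
  induction s using Finset.induction_on with
  | empty => simpa using const (M := M) 0
  | insert i s hi ih =>
    simp only [sum_insert hi]
    exact (hq i (mem_insert_self i s)).add (ih fun j hj => hq j (mem_insert_of_mem hj))

theorem comp_addMonoidHom (hq : IsEvenQuadratic q) (L : N →+ M) :
    IsEvenQuadratic (fun y => q (L y)) := by
  have h : ∀ y z, quadPolar (fun y => q (L y)) y z = quadPolar q (L y) (L z) := by
    intro y z; simp [quadPolar]
  refine ⟨fun y z => ?_, fun y y' z => ?_⟩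
  · rw [h, hq.two_mul_quadPolar]
  · rw [h, h, h, map_add, hq.quadPolar_add_left]

theorem comp_add_const (hq : IsEvenQuadratic q) (b : M) : IsEvenQuadratic (fun x => q (x + b)) := by
  have h : ∀ x y, quadPolar (fun x => q (x + b)) x y = quadPolar q x y := by
    intro x y
    have := hq.quadPolar_add_left x b y
    simp only [quadPolar, zero_add] at this ⊢
    rw [add_comm b y, add_right_comm x b y] at this
    linear_combination this
  exact ⟨fun x y => by rw [h, hq.two_mul_quadPolar],
    fun x x' y => by rw [h, h, h, hq.quadPolar_add_left]⟩

theorem comp_affine (hq : IsEvenQuadratic q) {σ : N → M}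
    (hσ : ∀ y z, σ (y + z) = σ y + σ z - σ 0) : IsEvenQuadratic (fun y => q (σ y)) := by
  let L : N →+ M := AddMonoidHom.mk' (fun y => σ y - σ 0) fun y z => by rw [hσ]; abel
  simpa [L] using (hq.comp_add_const (σ 0)).comp_addMonoidHom L

end IsEvenQuadratic

section Boolean

variable {ι : Type*}

theorem ZMod.two_cases (u : ZMod 2) : u = 0 ∨ u = 1 := by
  revert u; decide

theorem isEvenQuadratic_z2z4 : IsEvenQuadratic z2z4 :=
  ⟨by unfold quadPolar; decide, by unfold quadPolar; decide⟩

theorem isEvenQuadratic_two_mul_z2z4_mul :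
    IsEvenQuadratic (fun p : ZMod 2 × ZMod 2 => 2 * (z2z4 p.1 * z2z4 p.2)) :=
  ⟨by unfold quadPolar; decide, by unfold quadPolar; decide⟩

theorem isEvenQuadratic_z2z4_apply (i : ι) : IsEvenQuadratic (fun x : ι → ZMod 2 => z2z4 (x i)) :=
  isEvenQuadratic_z2z4.comp_addMonoidHom (Pi.evalAddMonoidHom (fun _ : ι => ZMod 2) i)

theorem isEvenQuadratic_card_filter [Fintype ι] (p : ι → Prop) [DecidablePred p] :
    IsEvenQuadratic (fun x : ι → ZMod 2 => (#{i | p i ∧ x i = 1} : ZMod 4)) := by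
  have h : ∀ x : ι → ZMod 2, (#{i | p i ∧ x i = 1} : ZMod 4) = ∑ i with p i, z2z4 (x i) := by
    intro x
    have hz : ∀ u : ZMod 2, z2z4 u = if u = 1 then 1 else 0 := by decide
    simp_rw [hz, sum_boole, filter_filter]
  simpa only [h] using IsEvenQuadratic.sum _ fun i _ => isEvenQuadratic_z2z4_apply i

theorem isEvenQuadratic_monomial [DecidableEq ι] {S : Finset ι} {t : ZMod 4} (hS : #S ≤ 2)
    (heven : #S = 2 → ∃ u, t = 2 * u) :
    IsEvenQuadratic (fun x : ι → ZMod 2 => t * ∏ i ∈ S, z2z4 (x i)) := by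
  obtain hS | hS | hS : #S = 0 ∨ #S = 1 ∨ #S = 2 := by omega
  · simpa [card_eq_zero.mp hS] using IsEvenQuadratic.const (M := ι → ZMod 2) t
  · obtain ⟨i, rfl⟩ := card_eq_one.mp hS
    simpa using (isEvenQuadratic_z2z4_apply i).const_mul t
  · obtain ⟨i, j, hij, rfl⟩ := card_eq_two.mp hS
    obtain ⟨u, rfl⟩ := heven hS
    let L : (ι → ZMod 2) →+ ZMod 2 × ZMod 2 :=
      (Pi.evalAddMonoidHom (fun _ : ι => ZMod 2) i).prod
        (Pi.evalAddMonoidHom (fun _ : ι => ZMod 2) j)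
    simpa [prod_pair hij, L, mul_assoc, mul_left_comm u] using
      (isEvenQuadratic_two_mul_z2z4_mul.comp_addMonoidHom L).const_mul u

theorem isEvenQuadratic_evalML4 [Fintype ι] [DecidableEq ι] {c : Finset ι → ZMod 4}
    (hdeg : ∀ S : Finset ι, 2 < #S → c S = 0) (heven : ∀ S : Finset ι, #S = 2 → ∃ t, c S = 2 * t) :
    IsEvenQuadratic (evalML4 c) := by
  refine IsEvenQuadratic.sum univ fun S _ => ?_
  by_cases hS : #S ≤ 2
  · exact isEvenQuadratic_monomial hS (heven S)
  · simpa [hdeg S (by omega)] using IsEvenQuadratic.const (M := ι → ZMod 2) 0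

end Boolean

theorem IsEvenQuadratic.eq_zero_of_single {ι A : Type*} [Finite ι] [DecidableEq ι]
    [AddCommGroup A] {p : (ι → A) → ZMod 4} (hp : IsEvenQuadratic p) (h0 : p 0 = 0)
    (h1 : ∀ i u, p (Pi.single i u) = 0)
    (h2 : ∀ i j u v, quadPolar p (Pi.single i u) (Pi.single j v) = 0) : p = 0 := by
  have hpolar : ∀ x y, quadPolar p x y = 0 := by
    intro x y
    have hx : ∀ i u, quadPolar p (Pi.single i u) y = 0 := by
      intro i u
      rw [quadPolar_comm]
      exact DFunLike.congr_fun (AddMonoidHom.functions_ext _ (hp.quadPolarHom (Pi.single i u)) 0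
        fun j v => (quadPolar_comm _ _ _).trans (h2 i j u v)) y
    exact DFunLike.congr_fun (AddMonoidHom.functions_ext _ (hp.quadPolarHom y) 0 hx) x
  have hadd : ∀ x y, p (x + y) = p x + p y := by
    intro x y
    have := hpolar x y
    simp only [quadPolar, h0, add_zero] at this
    linear_combination this
  exact funext (DFunLike.congr_fun (AddMonoidHom.functions_ext _ (AddMonoidHom.mk' p hadd) 0 h1))

section Interpolation

variable {ι : Type*} [DecidableEq ι]

def charVec (T : Finset ι) : ι → ZMod 2 := ∑ i ∈ T, Pi.single i 1

theorem charVec_apply (T : Finset ι) (i : ι) : charVec T i = if i ∈ T then 1 else 0 := by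
  simp [charVec, Finset.sum_apply, Finset.sum_pi_single]

theorem evalML4_charVec [Fintype ι] (c : Finset ι → ZMod 4) (T : Finset ι) :
    evalML4 c (charVec T) = ∑ S ∈ T.powerset, c S := by
  have hprod : ∀ S : Finset ι, ∏ i ∈ S, z2z4 (charVec T i) = if S ⊆ T then 1 else 0 := by
    intro S
    simp_rw [charVec_apply, apply_ite z2z4, show z2z4 1 = 1 from rfl, show z2z4 0 = 0 from rfl,
      prod_boole]
    congr 1
  simp_rw [evalML4, hprod, mul_ite, mul_one, mul_zero, ← sum_filter]
  congr 1; ext S; simp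

theorem IsEvenQuadratic.eq_of_eq_charVec [Fintype ι] {q r : (ι → ZMod 2) → ZMod 4}
    (hq : IsEvenQuadratic q) (hr : IsEvenQuadratic r)
    (h : ∀ T : Finset ι, #T ≤ 2 → q (charVec T) = r (charVec T)) : q = r := by
  set p := fun x => q x - r x
  have hp : IsEvenQuadratic p := hq.sub hr
  have hp2 : ∀ T : Finset ι, #T ≤ 2 → p (charVec T) = 0 := fun T hT => sub_eq_zero.mpr (h T hT)
  have h0 : p 0 = 0 := by simpa [charVec] using hp2 ∅ (by simp)
  have h1 : ∀ i (u : ZMod 2), p (Pi.single i u) = 0 := by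
    intro i u
    obtain rfl | rfl := u.two_cases
    · rwa [Pi.single_zero]
    · simpa [charVec] using hp2 {i} (by simp)
  have hpolar : ∀ i j (u v : ZMod 2), quadPolar p (Pi.single i u) (Pi.single j v) = 0 := by
    intro i j u v
    obtain rfl | rfl := u.two_cases
    · rw [Pi.single_zero, hp.quadPolar_zero_left]
    obtain rfl | rfl := v.two_cases
    · rw [Pi.single_zero, quadPolar_comm, hp.quadPolar_zero_left]
    have hpair : p (Pi.single i 1 + Pi.single j 1) = 0 := by
      by_cases hij : i = j
      · rwa [hij, ZModModule.add_self]
      · simpa [charVec, sum_pair hij] using hp2 {i, j} card_le_two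
    simp only [quadPolar, hpair, h0, h1, sub_zero, add_zero]
  funext x
  exact sub_eq_zero.mp (congrFun (hp.eq_zero_of_single h0 h1 hpolar) x)

theorem Finset.sum_powerset_singleton {β : Type*} [AddCommMonoid β] (f : Finset ι → β) (j : ι) :
    ∑ S ∈ ({j} : Finset ι).powerset, f S = f ∅ + f {j} := by
  simpa using sum_powerset_insert (notMem_empty j) f

/-- Möbius inversion of `q` on the Boolean lattice, truncated at degree `2`. -/
def interpolationCoeff (q : (ι → ZMod 2) → ZMod 4) (S : Finset ι) : ZMod 4 :=
  if #S ≤ 2 then ∑ U ∈ S.powerset, (-1) ^ (#S - #U) * q (charVec U) else 0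

theorem interpolationCoeff_pair (q : (ι → ZMod 2) → ZMod 4) {i j : ι} (hij : i ≠ j) :
    interpolationCoeff q {i, j} = quadPolar q (charVec {i}) (charVec {j}) := by
  have hi : i ∉ ({j} : Finset ι) := by simpa using hij
  simp [interpolationCoeff, card_pair hij, sum_powerset_insert hi, sum_powerset_singleton,
    quadPolar, charVec, sum_pair hij]
  ring

theorem sum_powerset_interpolationCoeff (q : (ι → ZMod 2) → ZMod 4) {T : Finset ι} (hT : #T ≤ 2) :
    ∑ S ∈ T.powerset, interpolationCoeff q S = q (charVec T) := by
  obtain hT | hT | hT : #T = 0 ∨ #T = 1 ∨ #T = 2 := by omega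
  · simp [card_eq_zero.mp hT, interpolationCoeff, charVec]
  · obtain ⟨i, rfl⟩ := card_eq_one.mp hT
    simp [interpolationCoeff, charVec, sum_powerset_singleton]
  · obtain ⟨i, j, hij, rfl⟩ := card_eq_two.mp hT
    have hi : i ∉ ({j} : Finset ι) := by simpa using hij
    rw [sum_powerset_insert hi, sum_powerset_singleton, sum_powerset_singleton,
      interpolationCoeff_pair q hij]
    simp [interpolationCoeff, charVec, quadPolar, sum_powerset_singleton, sum_pair hij]
    ring

theorem IsEvenQuadratic.exists_evalML4 [Fintype ι] {q : (ι → ZMod 2) → ZMod 4}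
    (hq : IsEvenQuadratic q) :
    ∃ c : Finset ι → ZMod 4, (∀ S : Finset ι, 2 < #S → c S = 0) ∧
      (∀ S : Finset ι, #S = 2 → ∃ t, c S = 2 * t) ∧ ∀ x, q x = evalML4 c x := by
  have hdeg : ∀ S : Finset ι, 2 < #S → interpolationCoeff q S = 0 := fun S hS => if_neg (by omega)
  have heven : ∀ S : Finset ι, #S = 2 → ∃ t, interpolationCoeff q S = 2 * t := by
    intro S hS
    obtain ⟨i, j, hij, rfl⟩ := card_eq_two.mp hS
    have h2 : ∀ r : ZMod 4, 2 * r = 0 → ∃ t, r = 2 * t := by decide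
    exact h2 _ (by rw [interpolationCoeff_pair q hij, hq.two_mul_quadPolar])
  refine ⟨interpolationCoeff q, hdeg, heven, congrFun ?_⟩
  refine hq.eq_of_eq_charVec (isEvenQuadratic_evalML4 hdeg heven) fun T hT => ?_
  rw [evalML4_charVec, sum_powerset_interpolationCoeff q hT]

end Interpolation

theorem iPow_natCast (m : ℕ) : iPow m = Complex.I ^ m := by
  rw [iPow, ZMod.val_natCast]
  conv_rhs => rw [← Nat.mod_add_div m 4, pow_add, pow_mul, Complex.I_pow_four, one_pow, mul_one]

theorem iPow_zero : iPow 0 = 1 := by simpa using iPow_natCast 0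

theorem iPow_add (r s : ZMod 4) : iPow (r + s) = iPow r * iPow s := by
  rw [← ZMod.natCast_zmod_val r, ← ZMod.natCast_zmod_val s, ← Nat.cast_add, iPow_natCast,
    iPow_natCast, iPow_natCast, pow_add]

theorem iPow_pow (s : ZMod 4) (m : ℕ) : iPow s ^ m = iPow (m * s) := by
  rw [← ZMod.natCast_zmod_val s, iPow_natCast, ← pow_mul, ← Nat.cast_mul, iPow_natCast, mul_comm]

theorem iPow_ne_zero (r : ZMod 4) : iPow r ≠ 0 := pow_ne_zero _ Complex.I_ne_zero

theorem exists_iPow_eq {a : ℂ} (ha : a ^ 4 = 1) : ∃ s, iPow s = a := by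
  obtain ⟨m, -, hm⟩ := Complex.isPrimitiveRoot_I.eq_pow_of_pow_eq_one ha
  exact ⟨m, by rw [iPow_natCast, hm]⟩

section Signature

variable {ι : Type*} [Fintype ι] [DecidableEq ι]

theorem exists_matrix_mulVec_extend1_eq_zero_iff (V : Submodule (ZMod 2) (ι → ZMod 2))
    (x₀ : ι → ZMod 2) :
    ∃ (m : ℕ) (A : Matrix (Fin m) (Option ι) (ZMod 2)),
      ∀ x, A.mulVec (extend1 x) = 0 ↔ x + x₀ ∈ V := by
  let ψ := (Module.finBasis (ZMod 2) ((ι → ZMod 2) ⧸ V)).equivFun.toLinearMap ∘ₗ V.mkQ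
  let A : Matrix _ (Option ι) (ZMod 2) :=
    Matrix.of fun r o => o.elim (ψ x₀ r) fun j => LinearMap.toMatrix' ψ r j
  refine ⟨_, A, fun x => ?_⟩
  have hA : A.mulVec (extend1 x) = ψ (x + x₀) := by
    ext r
    rw [map_add, Pi.add_apply, ← LinearMap.toMatrix'_mulVec ψ x]
    simp only [A, Matrix.mulVec, dotProduct, Fintype.sum_option, extend1, Matrix.of_apply,
      Option.elim, mul_one, add_comm]
  rw [hA, ← LinearMap.mem_ker, LinearEquiv.ker_comp, Submodule.ker_mkQ]

theorem IsAffine.exists_eq_iPow {f : (ι → ZMod 2) → ℂ} (hf : IsAffine f) :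
    ∃ (lam : ℂ) (q : (ι → ZMod 2) → ZMod 4), IsEvenQuadratic q ∧
      ∀ x, f x ≠ 0 → f x = lam * iPow (q x) := by
  obtain ⟨lam, m, A, c, hdeg, heven, hf⟩ := hf
  refine ⟨lam, evalML4 c, isEvenQuadratic_evalML4 hdeg heven, fun x hx => ?_⟩
  rw [hf x] at hx ⊢
  split_ifs at hx ⊢
  · ring
  · simp at hx

theorem isAffine_of_eq_iPow {f : (ι → ZMod 2) → ℂ} {x₀ : ι → ZMod 2}
    {V : Submodule (ZMod 2) (ι → ZMod 2)} (hsupp : {x | f x ≠ 0} = {x | x + x₀ ∈ V}) {lam : ℂ}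
    {q : (ι → ZMod 2) → ZMod 4} (hq : IsEvenQuadratic q)
    (hf : ∀ x, f x ≠ 0 → f x = lam * iPow (q x)) :
    IsAffine f := by
  obtain ⟨c, hdeg, heven, hc⟩ := hq.exists_evalML4
  obtain ⟨m, A, hA⟩ := exists_matrix_mulVec_extend1_eq_zero_iff V x₀
  refine ⟨lam, m, A, c, hdeg, heven, fun x => ?_⟩
  have hmem : f x ≠ 0 ↔ A.mulVec (extend1 x) = 0 := (Set.ext_iff.mp hsupp x).trans (hA x).symm
  by_cases hx : f x = 0
  · rw [if_neg (hmem.not.mp (not_not.mpr hx)), hx]; ring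
  · rw [if_pos (hmem.mp hx), hf x hx, ← hc]; ring

end Signature

theorem Submodule.add_sub_add_mem {R M : Type*} [Ring R] [AddCommGroup M] [Module R M]
    (V : Submodule R M) {x₀ x y z : M} (hx : x + x₀ ∈ V) (hy : y + x₀ ∈ V) (hz : z + x₀ ∈ V) :
    x + y - z + x₀ ∈ V := by
  convert V.sub_mem (V.add_mem hx hy) hz using 1
  abel

open Set

theorem Set.InjOn.section_add {M N : Type*} [AddCommGroup M] [AddCommGroup N] {P : Set M}
    (hP : ∀ x ∈ P, ∀ y ∈ P, ∀ z ∈ P, x + y - z ∈ P) {π : M →+ N} (hπ : InjOn π P)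
    {σ : N → M} (hσP : ∀ y, σ y ∈ P) (hπσ : ∀ y, π (σ y) = y) (y z : N) :
    σ (y + z) = σ y + σ z - σ 0 :=
  hπ (hσP _) (hP _ (hσP y) _ (hσP z) _ (hσP 0)) (by simp [hπσ])

theorem Set.InjOn.sum_fiber_eq {M N R : Type*} [Fintype M] [DecidableEq N]
    [NonUnitalNonAssocSemiring R] {f : M → R} {π : M → N} (hπ : InjOn π {x | f x ≠ 0})
    (g : M → R) {x₁ : M} (hx₁ : f x₁ ≠ 0) :
    ∑ x, (if π x = π x₁ then g x * f x else 0) = g x₁ * f x₁ := by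
  rw [Finset.sum_eq_single x₁ _ (by simp), if_pos rfl]
  intro x _ hx
  split_ifs with hxy
  · by_contra hne
    exact hx (hπ (right_ne_zero_of_mul hne) hx₁ hxy)
  · rfl

theorem isAffine_iff_of_bijOn_of_eq_iPow_mul {ι κ : Type*} [Fintype ι] [DecidableEq ι]
    [Fintype κ] [DecidableEq κ] {f : (ι → ZMod 2) → ℂ} {f' : (κ → ZMod 2) → ℂ}
    {x₀ : ι → ZMod 2} {V : Submodule (ZMod 2) (ι → ZMod 2)}
    (hsupp : {x | f x ≠ 0} = {x | x + x₀ ∈ V}) {π : (ι → ZMod 2) →+ (κ → ZMod 2)}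
    (hπ : BijOn π {x | f x ≠ 0} univ) {w : (ι → ZMod 2) → ZMod 4} (hw : IsEvenQuadratic w)
    (hf' : ∀ x, f x ≠ 0 → f' (π x) = iPow (w x) * f x) :
    IsAffine f ↔ IsAffine f' := by
  choose σ hσ hπσ using fun y => hπ.surjOn (mem_univ y)
  have hf'σ : ∀ y, f' y = iPow (w (σ y)) * f (σ y) := fun y => by
    rw [← hf' _ (hσ y), hπσ]
  have hf'_ne : ∀ y, f' y ≠ 0 := fun y => by
    rw [hf'σ]
    exact mul_ne_zero (iPow_ne_zero _) (hσ y)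
  constructor
  · intro hf_aff
    obtain ⟨lam, q, hq, hfq⟩ := hf_aff.exists_eq_iPow
    have haff : ∀ x ∈ {x | f x ≠ 0}, ∀ y ∈ {x | f x ≠ 0}, ∀ z ∈ {x | f x ≠ 0},
        x + y - z ∈ {x | f x ≠ 0} := by
      rw [hsupp]
      exact fun x hx y hy z hz => V.add_sub_add_mem hx hy hz
    refine isAffine_of_eq_iPow (x₀ := 0) (V := ⊤) (lam := lam) (by ext; simp [hf'_ne])
      ((hq.add hw).comp_affine (hπ.injOn.section_add haff hσ hπσ)) fun y _ => ?_
    rw [hf'σ, hfq _ (hσ y), iPow_add]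
    ring
  · intro hf'_aff
    obtain ⟨lam, q, hq, hfq⟩ := hf'_aff.exists_eq_iPow
    refine isAffine_of_eq_iPow hsupp (lam := lam)
      ((hq.comp_addMonoidHom π).add (hw.const_mul (-1))) fun x hx => ?_
    calc f x = iPow (-1 * w x) * (iPow (w x) * f x) := by
          rw [← mul_assoc, ← iPow_add, show -1 * w x + w x = 0 by ring, iPow_zero, one_mul]
      _ = lam * iPow (q (π x) + -1 * w x) := by
          rw [← hf' x hx, hfq _ (hf'_ne _), iPow_add]
          ring

theorem compressed_affine_iff_general (n k : ℕ)
    (f : (Fin n → ZMod 2) → ℂ)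
    (hsupp : HasAffineSupportDim f k)
    (S : Finset (Fin n))
    (hfree : Set.BijOn (fun (x : Fin n → ZMod 2) => (fun i : {i // i ∈ S} => x i.1))
      {x | f x ≠ 0} Set.univ)
    (a : ℂ) (ha : a ^ 4 = 1)
    (f' : ({i // i ∈ S} → ZMod 2) → ℂ)
    (hf' : ∀ y, f' y = ∑ x : Fin n → ZMod 2,
      if ∀ i : {i // i ∈ S}, x i.1 = y i then
        a ^ (Finset.univ.filter (fun i => i ∉ S ∧ x i = 1)).card * f x
      else 0) :
    IsAffine f ↔ IsAffine f' := by
  obtain ⟨x₀, V, -, hsupp⟩ := hsupp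
  obtain ⟨s, rfl⟩ := exists_iPow_eq ha
  let π : (Fin n → ZMod 2) →+ ({i // i ∈ S} → ZMod 2) := ⟨⟨fun x i => x i.1, rfl⟩, fun _ _ => rfl⟩
  have hπ : BijOn π {x | f x ≠ 0} univ := hfree
  refine isAffine_iff_of_bijOn_of_eq_iPow_mul hsupp hπ
    ((isEvenQuadratic_card_filter (· ∉ S)).const_mul s) fun x hx => ?_
  calc f' (π x) = ∑ x', if π x' = π x then iPow s ^ #{i | i ∉ S ∧ x' i = 1} * f x' else 0 :=
        (hf' _).trans (Finset.sum_congr rfl fun _ _ => if_congr funext_iff.symm rfl rfl)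
    _ = iPow s ^ #{i | i ∉ S ∧ x i = 1} * f x := hπ.injOn.sum_fiber_eq _ hx
    _ = iPow (s * #{i | i ∉ S ∧ x i = 1}) * f x := by rw [iPow_pow, mul_comm s]

theorem compressed_affine_iff (n k : ℕ) (hk : k < n)
    (f : (Fin n → ZMod 2) → ℂ)
    (hsupp : HasAffineSupportDim f k)
    (S : Finset (Fin n)) (hScard : S.card = k)
    (hfree : Set.BijOn (fun (x : Fin n → ZMod 2) => (fun i : {i // i ∈ S} => x i.1))
      {x | f x ≠ 0} Set.univ)
    (a : ℂ) (ha : a ^ 4 = 1)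
    (f' : ({i // i ∈ S} → ZMod 2) → ℂ)
    (hf' : ∀ y, f' y = ∑ x : Fin n → ZMod 2,
      if ∀ i : {i // i ∈ S}, x i.1 = y i then
        a ^ (Finset.univ.filter (fun i => i ∉ S ∧ x i = 1)).card * f x
      else 0) :
    IsAffine f ↔ IsAffine f' :=
  compressed_affine_iff_general n k f hsupp S hfree a ha f' hf'
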